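/- Killing one generator of a free colored Milnor group yields the free colored Milnor group on the remaining generators, with kernel the normal closure of that generator. Precisely: fix a color n : ι with r n = s + 1, let CMF = F/X be the free colored Milnor group on generators x_{ij} (i : ι, j : Fin (r i)), and let CMF' be the free colored Milnor group on the same generators with the single generator x_{n,s} removed (i.e., with r n replaced by s). Then the homomorphism CMF → CMF' sending the class of x_{n,s} to 1 and the class of every other generator x_{ij} to the class of x_{ij} is a well-defined surjection whose kernel is exactly the normal closure in CMF of the class of x_{n,s}. -/

import Mathlib

open scoped commutatorElement

/-- The Milnor relations: the normal closure in the free group on generators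
`x_{ij}` (indexed by `(i, j) : Σ i : ι, Fin (r i)`, where `i` is the color) of all
commutators of two conjugates of generators of the same color. -/
def milnorRels (ι : Type*) (r : ι → ℕ) : Subgroup (FreeGroup (Σ i : ι, Fin (r i))) :=
  Subgroup.normalClosure
    {w | ∃ (i : ι) (j k : Fin (r i)) (g₁ g₂ : FreeGroup (Σ i : ι, Fin (r i))),
      w = ⁅g₁ * FreeGroup.of ⟨i, j⟩ * g₁⁻¹, g₂ * FreeGroup.of ⟨i, k⟩ * g₂⁻¹⁆}

instance (ι : Type*) (r : ι → ℕ) : (milnorRels ι r).Normal :=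
  Subgroup.normalClosure_normal

/-- The free colored Milnor group `CMF = F/X`. -/
abbrev CMF (ι : Type*) (r : ι → ℕ) : Type _ :=
  FreeGroup (Σ i : ι, Fin (r i)) ⧸ milnorRels ι r

/-- The class of the generator `x_{ij}` in `CMF`. -/
def xg (ι : Type*) (r : ι → ℕ) (i : ι) (j : Fin (r i)) : CMF ι r :=
  QuotientGroup.mk (FreeGroup.of ⟨i, j⟩)

/-!
Let `r' ≤ r`. Truncating the generators of `CMF ι r` (sending `x_{ij}` with `j ≥ r' i` to `1`)
and including the generators of `CMF ι r'` are both colour-preserving on generators, so they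
respect the Milnor relations. The inclusion is a section of the truncation, and modulo the normal
closure `N` of the killed generators it is also a retraction; hence the kernel of the truncation
is exactly `N`. Killing `x_{n,s}` is the case `r' = update r n s`.
-/

namespace CMF

variable {ι : Type*}

theorem hom_ext {r : ι → ℕ} {G : Type*} [Group G] {f g : CMF ι r →* G}
    (h : ∀ i j, f (xg ι r i j) = g (xg ι r i j)) : f = g :=
  QuotientGroup.monoidHom_ext _ (FreeGroup.ext_hom _ _ fun p => h p.1 p.2)

section Map

variable {r r' : ι → ℕ} (f : (Σ i, Fin (r i)) → FreeGroup (Σ i, Fin (r' i)))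
  (hf : ∀ i j, f ⟨i, j⟩ = 1 ∨ ∃ j', f ⟨i, j⟩ = FreeGroup.of ⟨i, j'⟩)

include hf in
theorem milnorRels_le_comap_lift :
    milnorRels ι r ≤ (milnorRels ι r').comap (FreeGroup.lift f) := by
  refine Subgroup.normalClosure_le_normal ?_
  rintro _ ⟨i, j, k, g₁, g₂, rfl⟩
  simp only [SetLike.mem_coe, Subgroup.mem_comap, map_commutatorElement, map_mul, map_inv,
    FreeGroup.lift_apply_of]
  obtain hj | ⟨j', hj⟩ := hf i j
  · simp [hj, one_mem]
  obtain hk | ⟨k', hk⟩ := hf i k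
  · simp [hk, one_mem]
  rw [hj, hk]
  exact Subgroup.subset_normalClosure ⟨i, j', k', _, _, rfl⟩

def map : CMF ι r →* CMF ι r' :=
  QuotientGroup.map _ _ (FreeGroup.lift f) (milnorRels_le_comap_lift f hf)

theorem map_xg (i : ι) (j : Fin (r i)) : map f hf (xg ι r i j) = QuotientGroup.mk (f ⟨i, j⟩) := by
  simp [map, xg]

end Map

section Truncate

variable (r r' : ι → ℕ)

def truncateGen (p : Σ i, Fin (r i)) : FreeGroup (Σ i, Fin (r' i)) :=
  if h : (p.2 : ℕ) < r' p.1 then FreeGroup.of ⟨p.1, ⟨p.2, h⟩⟩ else 1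

def truncate : CMF ι r →* CMF ι r' :=
  map (truncateGen r r') fun i j => by
    unfold truncateGen
    split_ifs
    exacts [Or.inr ⟨_, rfl⟩, Or.inl rfl]

variable {r r'}

def incl (h : r' ≤ r) : CMF ι r' →* CMF ι r :=
  map (fun p => FreeGroup.of ⟨p.1, Fin.castLE (h p.1) p.2⟩) fun _ _ => Or.inr ⟨_, rfl⟩

theorem truncate_xg_of_lt {i : ι} {j : Fin (r i)} (hj : (j : ℕ) < r' i) :
    truncate r r' (xg ι r i j) = xg ι r' i ⟨j, hj⟩ := by
  rw [truncate, map_xg, truncateGen, dif_pos hj]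
  rfl

theorem truncate_xg_of_le {i : ι} {j : Fin (r i)} (hj : r' i ≤ j) :
    truncate r r' (xg ι r i j) = 1 := by
  rw [truncate, map_xg, truncateGen, dif_neg hj.not_gt]
  rfl

theorem incl_xg (h : r' ≤ r) (i : ι) (j : Fin (r' i)) :
    incl h (xg ι r' i j) = xg ι r i (Fin.castLE (h i) j) :=
  map_xg _ _ i j

theorem truncate_comp_incl (h : r' ≤ r) : (truncate r r').comp (incl h) = MonoidHom.id _ :=
  hom_ext fun i j => by
    rw [MonoidHom.comp_apply, incl_xg, truncate_xg_of_lt (j := Fin.castLE (h i) j) j.isLt]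
    rfl

theorem truncate_surjective (h : r' ≤ r) : Function.Surjective (truncate r r') :=
  Function.LeftInverse.surjective (f := truncate r r') (g := incl h)
    (DFunLike.congr_fun (truncate_comp_incl h))

def killed (r r' : ι → ℕ) : Subgroup (CMF ι r) :=
  Subgroup.normalClosure {x | ∃ (i : ι) (j : Fin (r i)), r' i ≤ j ∧ xg ι r i j = x}

instance : (killed r r').Normal :=
  Subgroup.normalClosure_normal

theorem incl_comp_truncate_eq_mk' (h : r' ≤ r) :
    ((QuotientGroup.mk' (killed r r')).comp (incl h)).comp (truncate r r') =
      QuotientGroup.mk' (killed r r') := by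
  refine hom_ext fun i j => ?_
  by_cases hj : (j : ℕ) < r' i
  · simp only [MonoidHom.comp_apply, truncate_xg_of_lt hj, incl_xg]
    rfl
  · have hmem : xg ι r i j ∈ killed r r' :=
      Subgroup.subset_normalClosure ⟨i, j, not_lt.mp hj, rfl⟩
    simp only [MonoidHom.comp_apply, truncate_xg_of_le (not_lt.mp hj), map_one]
    exact ((QuotientGroup.eq_one_iff _).mpr hmem).symm

theorem ker_truncate (h : r' ≤ r) : (truncate r r').ker = killed r r' := by
  refine le_antisymm (fun x hx => ?_) (Subgroup.normalClosure_le_normal ?_)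
  · rw [← QuotientGroup.eq_one_iff, ← QuotientGroup.mk'_apply,
      ← incl_comp_truncate_eq_mk' h]
    simp [(MonoidHom.mem_ker).mp hx]
  · rintro _ ⟨i, j, hj, rfl⟩
    exact truncate_xg_of_le hj

theorem killed_update [DecidableEq ι] {r : ι → ℕ} {n : ι} {s : ℕ} (hn : r n = s + 1) :
    killed r (Function.update r n s) =
      Subgroup.normalClosure {xg ι r n (Fin.cast hn.symm (Fin.last s))} := by
  refine congrArg Subgroup.normalClosure (Set.ext fun x => ⟨?_, ?_⟩)
  · rintro ⟨i, j, hj, rfl⟩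
    obtain rfl : i = n := by
      by_contra hi
      rw [Function.update_of_ne hi] at hj
      exact hj.not_gt j.isLt
    obtain rfl : j = Fin.cast hn.symm (Fin.last s) := by
      ext
      simp only [Function.update_self] at hj
      simp only [Fin.val_cast, Fin.val_last]
      omega
    rfl
  · rintro rfl
    exact ⟨n, _, by simp, rfl⟩

end Truncate

end CMF

theorem kill_one_generator_general (ι : Type*) [DecidableEq ι] (r : ι → ℕ)
    (n : ι) (s : ℕ) (hn : r n = s + 1) :
    ∃ φ : CMF ι r →* CMF ι (Function.update r n s),
      φ (xg ι r n (Fin.cast hn.symm (Fin.last s))) = 1 ∧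
      (∀ (i : ι) (hi : i ≠ n) (j : Fin (r i)),
        φ (xg ι r i j) =
          xg ι (Function.update r n s) i
            (Fin.cast (Function.update_of_ne hi s r).symm j)) ∧
      (∀ (j : Fin (r n)) (hj : (j : ℕ) < s),
        φ (xg ι r n j) =
          xg ι (Function.update r n s) n
            (Fin.cast (Function.update_self n s r).symm ⟨(j : ℕ), hj⟩)) ∧
      Function.Surjective φ ∧
      φ.ker = Subgroup.normalClosure {xg ι r n (Fin.cast hn.symm (Fin.last s))} := by
  have hle : Function.update r n s ≤ r := update_le_iff.mpr ⟨by omega, fun _ _ => le_rfl⟩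
  refine ⟨CMF.truncate r (Function.update r n s), CMF.truncate_xg_of_le (by simp),
    fun _ _ _ => CMF.truncate_xg_of_lt _, fun _ _ => CMF.truncate_xg_of_lt _,
    CMF.truncate_surjective hle, ?_⟩
  rw [CMF.ker_truncate hle, CMF.killed_update hn]

/-- killing the single generator `x_{n,s}` of the free colored Milnor
group on generators `x_{ij}` (`i : ι`, `j : Fin (r i)`, with `r n = s + 1`) yields
the free colored Milnor group on the remaining generators (i.e. with `r n` replaced
by `s`): there is a homomorphism sending the class of `x_{n,s}` to `1` and the class
of every other generator to the class of the corresponding generator, and it is a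
surjection whose kernel is exactly the normal closure of the class of `x_{n,s}`. -/
theorem kill_one_generator (ι : Type*) [Fintype ι] [DecidableEq ι] (r : ι → ℕ)
    (n : ι) (s : ℕ) (hn : r n = s + 1) :
    ∃ φ : CMF ι r →* CMF ι (Function.update r n s),
      φ (xg ι r n (Fin.cast hn.symm (Fin.last s))) = 1 ∧
      (∀ (i : ι) (hi : i ≠ n) (j : Fin (r i)),
        φ (xg ι r i j) =
          xg ι (Function.update r n s) i
            (Fin.cast (Function.update_of_ne hi s r).symm j)) ∧
      (∀ (j : Fin (r n)) (hj : (j : ℕ) < s),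
        φ (xg ι r n j) =
          xg ι (Function.update r n s) n
            (Fin.cast (Function.update_self n s r).symm ⟨(j : ℕ), hj⟩)) ∧
      Function.Surjective φ ∧
      φ.ker = Subgroup.normalClosure {xg ι r n (Fin.cast hn.symm (Fin.last s))} :=
  kill_one_generator_general ι r n s hn
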